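/- Let n ≥ 1 be an integer, let q be a real number with 0 < q < 1, and let ν ∈ Λ_n be a partition with ν_n > 0. Then 𝔰_ν(q^{2(ν+δ)}; q²) = q^{2|ν| − 2n} · 𝔰_{1^n}(q^{2(ν+δ)}; q²) · 𝔰_{ν−1^n}(q^{2((ν−1^n)+δ)}; q²), where 1^n denotes the partition (1, 1, …, 1) ∈ Λ_n and ν − 1^n = (ν_1 − 1, …, ν_n − 1). -/

import Mathlib

/-
Write `x = q²·y` with `y = q^{2((ν−1^n)+δ)}`. Splitting off the factor `m = 0` of every entry of the
numerator matrix of `𝔰_ν(x; q²)` leaves the row factor `x_i − 1`, the column factor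
`(q²)^{ν_j+n−j−1}` and the corresponding entry of the numerator of `𝔰_{ν−1^n}(y; q²)`, while the
Vandermonde denominator scales by `(q²)^{n(n−1)/2}`. Finally `𝔰_{1^n}(x; q²) = ∏ (x_i − 1)`: after
removing the same row factors, its numerator has monic polynomials of degrees `n−1, …, 0` in its
columns, so its determinant is the Vandermonde product.
-/

open BigOperators Finset

/-- The q-factorial Schur polynomial `𝔰_ν(x; q)` evaluated at a point
`x = (x_1, …, x_n)` (with pairwise distinct coordinates):
`det( ∏_{m=0}^{ν_j+n−j−1} (x_i − q^m) ) / ∏_{i<j} (x_i − x_j)`.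
Here indices are 0-based, so the number of factors in the `j`-th column
is `ν j + (n - 1 - j)`. -/
noncomputable def qfactSchur (n : ℕ) (q : ℝ) (ν : Fin n → ℕ) (x : Fin n → ℝ) : ℝ :=
  (Matrix.det (Matrix.of fun i j : Fin n =>
      ∏ m ∈ Finset.range (ν j + (n - 1 - (j : ℕ))), (x i - q ^ m))) /
    ∏ i : Fin n, ∏ j ∈ Finset.Ioi i, (x i - x j)

/-- The interpolation point `q^{2(ν+δ)} = (q^{2(ν_1+n−1)}, …, q^{2ν_n})`. -/
noncomputable def qPoint (n : ℕ) (q : ℝ) (ν : Fin n → ℕ) : Fin n → ℝ :=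
  fun i => q ^ (2 * (ν i + (n - 1 - (i : ℕ))))

open Matrix Polynomial

section Alternant

variable {R : Type*} [CommRing R] {n : ℕ}

theorem det_projVandermonde_one_left (x : Fin n → R) :
    (projVandermonde 1 x).det = ∏ i : Fin n, ∏ j ∈ Ioi i, (x i - x j) := by
  simp [det_projVandermonde]

theorem det_eval_monic_eq_prod_sub (x : Fin n → R) (p : Fin n → R[X])
    (h_deg : ∀ j : Fin n, (p j).natDegree = n - 1 - j) (h_monic : ∀ j, (p j).Monic) :
    (of fun i j => (p j).eval (x i)).det = ∏ i : Fin n, ∏ j ∈ Ioi i, (x i - x j) := by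
  have hrev : ∀ j : Fin n, n - 1 - (j.rev : ℕ) = j := fun j => by
    rw [Fin.val_rev]; omega
  have hp : (vandermonde x).det = ((of fun i j => (p j).eval (x i)).submatrix id Fin.revPerm).det :=
    det_eval_matrixOfPolynomials_eq_det_vandermonde x (fun j => p j.rev)
      (fun j => (h_deg _).trans (hrev j)) (fun j => h_monic _)
  have hV : vandermonde x = (projVandermonde 1 x).submatrix id Fin.revPerm := by
    ext i j
    simp [projVandermonde_apply]
  rw [det_permute', hV, det_permute', det_projVandermonde_one_left] at hp
  exact (((Equiv.Perm.sign Fin.revPerm).isUnit.map (Int.castRingHom R)).mul_left_cancel hp).symm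

def qfactMatrix (n : ℕ) (q : R) (ν : Fin n → ℕ) (x : Fin n → R) : Matrix (Fin n) (Fin n) R :=
  of fun i j => ∏ m ∈ range (ν j + (n - 1 - (j : ℕ))), (x i - q ^ m)

theorem det_qfactMatrix_one (q : R) (x : Fin n → R) :
    (qfactMatrix n q (fun _ => 1) x).det =
      (∏ i, (x i - 1)) * ∏ i : Fin n, ∏ j ∈ Ioi i, (x i - x j) := by
  nontriviality R
  let p : Fin n → R[X] := fun j => ∏ m ∈ range (n - 1 - (j : ℕ)), (X - C (q ^ (m + 1)))
  have h_monic : ∀ j, (p j).Monic := fun j => monic_prod_of_monic _ _ fun m _ => monic_X_sub_C _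
  have h_deg : ∀ j : Fin n, (p j).natDegree = n - 1 - j := fun j => by
    simp only [p, natDegree_finsetProd_X_sub_C_eq_card, card_range]
  have h_entry : qfactMatrix n q (fun _ => 1) x = of fun i j => (x i - 1) * (p j).eval (x i) := by
    ext i j
    simp [qfactMatrix, p, eval_prod, add_comm 1, prod_range_succ', mul_comm]
  rw [h_entry, ← det_eval_monic_eq_prod_sub x p h_deg h_monic]
  exact det_mul_column _ _

theorem prod_range_succ_mul_sub_pow (c y : R) (k : ℕ) :
    ∏ m ∈ range (k + 1), (c * y - c ^ m) = (c * y - 1) * c ^ k * ∏ m ∈ range k, (y - c ^ m) := by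
  have h_factor : ∀ m, c * y - c ^ (m + 1) = c * (y - c ^ m) := fun m => by ring
  simp_rw [prod_range_succ', h_factor, prod_mul_distrib, prod_const, card_range, pow_zero]
  ring

theorem det_qfactMatrix_smul (c : R) (ν : Fin n → ℕ) (hν : ∀ j, 1 ≤ ν j) (y : Fin n → R) :
    (qfactMatrix n c ν (c • y)).det =
      (∏ i, (c * y i - 1)) * c ^ (∑ j : Fin n, (ν j - 1 + (n - 1 - (j : ℕ)))) *
        (qfactMatrix n c (fun j => ν j - 1) y).det := by
  set M := qfactMatrix n c (fun j => ν j - 1) y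
  have h_entry : qfactMatrix n c ν (c • y) =
      of fun i j => (c * y i - 1) * (of fun i j => c ^ (ν j - 1 + (n - 1 - (j : ℕ))) * M i j) i j := by
    ext i j
    simp only [M, qfactMatrix, of_apply, Pi.smul_apply, smul_eq_mul]
    rw [← mul_assoc, ← prod_range_succ_mul_sub_pow]
    congr 2
    have := hν j
    omega
  rw [h_entry, det_mul_column, det_mul_row, prod_pow_eq_pow_sum, mul_assoc]

theorem prod_Ioi_smul_sub_smul (c : R) (y : Fin n → R) :
    ∏ i : Fin n, ∏ j ∈ Ioi i, ((c • y) i - (c • y) j) =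
      c ^ (∑ j : Fin n, (n - 1 - (j : ℕ))) * ∏ i : Fin n, ∏ j ∈ Ioi i, (y i - y j) := by
  simp_rw [Pi.smul_apply, smul_eq_mul, ← mul_sub, prod_mul_distrib, prod_const, Fin.card_Ioi,
    prod_pow_eq_pow_sum]

end Alternant

theorem qfactSchur_eq_det_div {n : ℕ} (q : ℝ) (ν : Fin n → ℕ) (x : Fin n → ℝ) :
    qfactSchur n q ν x = (qfactMatrix n q ν x).det / ∏ i : Fin n, ∏ j ∈ Ioi i, (x i - x j) :=
  rfl

theorem qfactSchur_smul {n : ℕ} (c : ℝ) (ν : Fin n → ℕ) (hν : ∀ j, 1 ≤ ν j) (y : Fin n → ℝ) :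
    qfactSchur n c ν (c • y) =
      c ^ (∑ j, (ν j - 1)) * qfactSchur n c (fun _ => 1) (c • y) *
        qfactSchur n c (fun j => ν j - 1) y := by
  rw [qfactSchur_eq_det_div, qfactSchur_eq_det_div, qfactSchur_eq_det_div,
    det_qfactMatrix_smul c ν hν, det_qfactMatrix_one, prod_Ioi_smul_sub_smul]
  simp only [sum_add_distrib, pow_add, Pi.smul_apply, smul_eq_mul]
  set V := ∏ i : Fin n, ∏ j ∈ Ioi i, (y i - y j)
  set cT := c ^ ∑ j : Fin n, (n - 1 - (j : ℕ))
  rcases eq_or_ne (cT * V) 0 with h | h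
  · -- coinciding coordinates: both sides are junk values `_ / 0 = 0`
    simp [h]
  · have hcT : cT ≠ 0 := left_ne_zero_of_mul h
    have hV : V ≠ 0 := right_ne_zero_of_mul h
    field_simp

theorem qPoint_eq_sq_smul_qPoint {n : ℕ} (q : ℝ) (ν : Fin n → ℕ) (hν : ∀ i, 1 ≤ ν i) :
    qPoint n q ν = q ^ 2 • qPoint n q (fun i => ν i - 1) := by
  ext i
  rw [Pi.smul_apply, smul_eq_mul, qPoint, qPoint, ← pow_add]
  congr 1
  have := hν i
  omega

/-- for a partition `ν ∈ Λ_n` with `ν_n > 0`,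
`𝔰_ν(q^{2(ν+δ)}; q²) = q^{2|ν|−2n} · 𝔰_{1^n}(q^{2(ν+δ)}; q²) · 𝔰_{ν−1^n}(q^{2((ν−1^n)+δ)}; q²)`. -/
theorem qfactSchur_self_factor (n : ℕ) (hn : 1 ≤ n) (q : ℝ)
    (ν : Fin n → ℕ) (hν : Antitone ν) (hlast : 0 < ν ⟨n - 1, by omega⟩) :
    qfactSchur n (q ^ 2) ν (qPoint n q ν) =
      q ^ (2 * (∑ i, (ν i : ℤ)) - 2 * n) *
        qfactSchur n (q ^ 2) (fun _ => 1) (qPoint n q ν) *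
        qfactSchur n (q ^ 2) (fun i => ν i - 1) (qPoint n q (fun i => ν i - 1)) := by
  have hν1 : ∀ i, 1 ≤ ν i := fun i => hlast.trans_le (hν (Fin.le_def.2 (Nat.le_sub_one_of_lt i.2)))
  have h_exp : 2 * (∑ i, (ν i : ℤ)) - 2 * n = ((2 * ∑ i, (ν i - 1) : ℕ) : ℤ) := by
    push_cast [Nat.cast_sub (hν1 _)]
    simp [sum_sub_distrib, mul_sub]
  rw [h_exp, zpow_natCast, pow_mul, qPoint_eq_sq_smul_qPoint q ν hν1]
  exact qfactSchur_smul _ ν hν1 _
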